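/- arXiv:2008.11710 — 2 statements merged into one kernel-verified Lean document; each statement's English description precedes it below -/
import Mathlib

section
/- Let V ∈ C¹(𝕋) be periodic with Gibbs density ρ∞ = e^{-V}/Z, v = -V', and let φ : 𝕋 → ℝ be continuous with ∫_𝕋 φ ρ∞ dy = 0. Then the function χ(y) = B + ∫_0^y e^{V(y')} [A + ∫_0^{y'} φ(ȳ) e^{-V(ȳ)} dȳ] dy', with A = -[∫_𝕋 e^{V(y')} dy']^{-1} ∫_𝕋 ∫_0^{y'} φ(ȳ) e^{V(y')-V(ȳ)} dȳ dy' and B chosen so that ∫_𝕋 χ ρ∞ dy = 0, is a periodic C² solution of the Poisson equation v χ' + χ'' = φ with ∫_𝕋 χ ρ∞ dy = 0. -/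
/-!
With the integrating factor `e^{-V}` the operator becomes `L χ = e^{V} (e^{-V} χ')'`, so
`L χ = φ` integrates twice into the stated formula for every `A` and `B`. The constants only
serve the periodicity and the normalisation: the centering `∫ φ e^{-V} = 0` makes
`∫_0^y φ e^{-V}` periodic, hence `χ'` periodic; `A` is the unique constant making `∫_𝕋 χ' = 0`,
hence `χ` periodic; and `B` subtracts the `ρ∞`-mean.
-/

open Real intervalIntegral

theorem Function.Periodic.primitive_periodic_of_integral_eq_zero {E : Type*}
    [NormedAddCommGroup E] [NormedSpace ℝ E] {f : ℝ → E} {T : ℝ}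
    (hf : Function.Periodic f T)
    (h_int : ∀ t₁ t₂, IntervalIntegrable f MeasureTheory.volume t₁ t₂)
    (hzero : ∫ x in (0:ℝ)..T, f x = 0) (a : ℝ) :
    Function.Periodic (fun x => ∫ t in a..x, f t) T := fun x => by
  simp only [hf.intervalIntegral_add_eq_add a x h_int, hf.intervalIntegral_add_eq a 0, zero_add,
    hzero, add_zero]

theorem contDiff_succ_primitive {E : Type*} [NormedAddCommGroup E] [NormedSpace ℝ E]
    [CompleteSpace E] {f : ℝ → E} {n : ℕ} (hf : ContDiff ℝ n f) (a : ℝ) :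
    ContDiff ℝ (n + 1) (fun x => ∫ t in a..x, f t) := by
  have hfc := hf.continuous
  refine contDiff_succ_iff_deriv.2
    ⟨fun x => (hfc.integral_hasStrictDerivAt a x).hasDerivAt.differentiableAt, by simp, ?_⟩
  simpa only [funext (hfc.deriv_integral f a)] using hf

theorem intervalIntegral_exp_pos {f : ℝ → ℝ} (hf : Continuous f) {a b : ℝ} (hab : a < b) :
    0 < ∫ x in a..b, exp (f x) :=
  intervalIntegral_pos_of_pos ((continuous_exp.comp hf).intervalIntegrable a b)
    (fun _ => exp_pos _) hab

theorem integral_centered_mul_eq_zero {H ρ : ℝ → ℝ} (hH : Continuous H) (hρ : Continuous ρ)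
    {a b : ℝ} (hρ_one : ∫ x in a..b, ρ x = 1) :
    ∫ x in a..b, (-(∫ t in a..b, ρ t * H t) + H x) * ρ x = 0 := by
  simp only [add_mul]
  have hc : Continuous fun x => (-(∫ t in a..b, ρ t * H t)) * ρ x := continuous_const.mul hρ
  have hHρ : Continuous fun x => H x * ρ x := hH.mul hρ
  rw [integral_add (hc.intervalIntegrable a b) (hHρ.intervalIntegrable a b),
    integral_const_mul, hρ_one]
  simp only [mul_comm (H _)]
  ring

/-- The derivative `χ'` of the explicit solution. -/
noncomputable def poissonFlux (V φ : ℝ → ℝ) (A y : ℝ) : ℝ :=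
  exp (V y) * (A + ∫ t in (0:ℝ)..y, φ t * exp (-V t))

section poissonFlux

variable {V φ : ℝ → ℝ} {A : ℝ}

theorem continuous_poissonFlux (hV : Continuous V) (hφ : Continuous φ) :
    Continuous (poissonFlux V φ A) :=
  (continuous_exp.comp hV).mul <| continuous_const.add <|
    continuous_primitive (fun _ _ => (hφ.mul (continuous_exp.comp hV.neg)).intervalIntegrable _ _) 0

theorem hasDerivAt_poissonFlux (hV : Differentiable ℝ V) (hφ : Continuous φ) (y : ℝ) :
    HasDerivAt (poissonFlux V φ A) (deriv V y * poissonFlux V φ A y + φ y) y := by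
  have hg : Continuous fun t => φ t * exp (-V t) := hφ.mul (continuous_exp.comp hV.continuous.neg)
  have := ((hV y).hasDerivAt.exp).mul (((hg.integral_hasStrictDerivAt 0 y).hasDerivAt).const_add A)
  refine this.congr_deriv ?_
  rw [poissonFlux, exp_neg]
  field_simp

theorem contDiff_poissonFlux (hV : ContDiff ℝ 1 V) (hφ : Continuous φ) :
    ContDiff ℝ 1 (poissonFlux V φ A) := by
  have hVd := hV.differentiable one_ne_zero
  refine contDiff_one_iff_deriv.2 ⟨fun y => (hasDerivAt_poissonFlux hVd hφ y).differentiableAt, ?_⟩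
  rw [funext fun y => (hasDerivAt_poissonFlux (A := A) hVd hφ y).deriv]
  exact ((hV.continuous_deriv le_rfl).mul (continuous_poissonFlux hV.continuous hφ)).add hφ

theorem periodic_poissonFlux {T : ℝ} (hV : Continuous V) (hVper : Function.Periodic V T)
    (hφ : Continuous φ) (hφper : Function.Periodic φ T)
    (hcenter : ∫ t in (0:ℝ)..T, φ t * exp (-V t) = 0) :
    Function.Periodic (poissonFlux V φ A) T := fun y => by
  have hG := Function.Periodic.primitive_periodic_of_integral_eq_zero
    (f := fun t => φ t * exp (-V t)) (fun t => by simp only [hφper t, hVper t])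
    (fun _ _ => (hφ.mul (continuous_exp.comp hV.neg)).intervalIntegrable _ _) hcenter 0
  simp only [poissonFlux, hVper y, hG y]

theorem integral_poissonFlux (hV : Continuous V) (hφ : Continuous φ) (T : ℝ) :
    ∫ y in (0:ℝ)..T, poissonFlux V φ A y =
      A * (∫ y in (0:ℝ)..T, exp (V y)) +
        ∫ y' in (0:ℝ)..T, ∫ yb in (0:ℝ)..y', φ yb * exp (V y' - V yb) := by
  have hG : Continuous fun y => ∫ t in (0:ℝ)..y, φ t * exp (-V t) :=
    continuous_primitive (fun _ _ => (hφ.mul (continuous_exp.comp hV.neg)).intervalIntegrable _ _) 0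
  have hexp : Continuous fun y => exp (V y) := continuous_exp.comp hV
  have hinner : ∀ y', exp (V y') * ∫ t in (0:ℝ)..y', φ t * exp (-V t) =
      ∫ yb in (0:ℝ)..y', φ yb * exp (V y' - V yb) := fun y' => by
    rw [← integral_const_mul]
    congr 1 with t
    rw [exp_sub, exp_neg]
    ring
  simp only [poissonFlux, mul_add, hinner]
  have hA : Continuous fun y => exp (V y) * A := hexp.mul continuous_const
  have hB : Continuous fun y' => ∫ yb in (0:ℝ)..y', φ yb * exp (V y' - V yb) :=
    (hexp.mul hG).congr hinner
  rw [integral_add (hA.intervalIntegrable 0 T) (hB.intervalIntegrable 0 T), integral_mul_const]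
  ring

end poissonFlux

/-- Explicit solution of the periodic Poisson problem
`v χ' + χ'' = φ`, `∫ χ ρ∞ = 0`, where `v = -V'` and `ρ∞ = e^{-V}/Z`. -/
theorem poisson_explicit_solution
    (V : ℝ → ℝ) (hV : ContDiff ℝ 1 V) (hVper : Function.Periodic V (2 * π))
    (Z : ℝ) (hZ : Z = ∫ y in (0:ℝ)..(2 * π), Real.exp (-V y))
    (ρ : ℝ → ℝ) (hρ : ∀ y, ρ y = Real.exp (-V y) / Z)
    (v : ℝ → ℝ) (hv : ∀ y, v y = -deriv V y)
    (φ : ℝ → ℝ) (hφ : Continuous φ) (hφper : Function.Periodic φ (2 * π))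
    (hφmean : ∫ y in (0:ℝ)..(2 * π), φ y * ρ y = 0)
    (A B : ℝ)
    (hA : A = -(∫ y' in (0:ℝ)..(2 * π),
        ∫ yb in (0:ℝ)..y', φ yb * Real.exp (V y' - V yb))
        / (∫ y' in (0:ℝ)..(2 * π), Real.exp (V y')))
    (χ : ℝ → ℝ)
    (hχ : ∀ y, χ y = B + ∫ y' in (0:ℝ)..y,
        Real.exp (V y') * (A + ∫ yb in (0:ℝ)..y', φ yb * Real.exp (-V yb)))
    (hB : B = -∫ y in (0:ℝ)..(2 * π), ρ y *
        ∫ y' in (0:ℝ)..y,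
          Real.exp (V y') * (A + ∫ yb in (0:ℝ)..y', φ yb * Real.exp (-V yb))) :
    Function.Periodic χ (2 * π) ∧ ContDiff ℝ 2 χ ∧
      (∀ y, v y * deriv χ y + deriv (deriv χ) y = φ y) ∧
      (∫ y in (0:ℝ)..(2 * π), χ y * ρ y) = 0 := by
  obtain rfl : χ = fun y => B + ∫ y' in (0:ℝ)..y, poissonFlux V φ A y' := funext hχ
  obtain rfl : ρ = fun y => exp (-V y) / Z := funext hρ
  have hVc := hV.continuous
  have hFc : Continuous (poissonFlux V φ A) := continuous_poissonFlux hVc hφ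
  have hZ_pos : 0 < Z := hZ ▸ intervalIntegral_exp_pos hVc.neg two_pi_pos
  have hcenter : ∫ t in (0:ℝ)..2 * π, φ t * exp (-V t) = 0 := by
    simpa only [mul_div_assoc', integral_div, div_eq_zero_iff, hZ_pos.ne', or_false] using hφmean
  have hF_int : ∫ y in (0:ℝ)..2 * π, poissonFlux V φ A y = 0 := by
    have hexp_ne := (intervalIntegral_exp_pos hVc two_pi_pos).ne'
    rw [integral_poissonFlux hVc hφ, hA]
    field_simp
    ring
  have hχ' : deriv (fun y => B + ∫ y' in (0:ℝ)..y, poissonFlux V φ A y') = poissonFlux V φ A :=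
    funext fun y => by rw [deriv_const_add, hFc.deriv_integral]
  refine ⟨fun y => ?_, ?_, fun y => ?_, ?_⟩
  · simp only [(periodic_poissonFlux hVc hVper hφ hφper hcenter).primitive_periodic_of_integral_eq_zero
      (fun _ _ => hFc.intervalIntegrable _ _) hF_int 0 y]
  · exact contDiff_const.add (contDiff_succ_primitive (contDiff_poissonFlux hV hφ) 0)
  · rw [hv, hχ', (hasDerivAt_poissonFlux (hV.differentiable one_ne_zero) hφ y).deriv]
    ring
  · have hρc : Continuous fun y => exp (-V y) / Z := (continuous_exp.comp hVc.neg).div_const Z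
    subst hB
    refine integral_centered_mul_eq_zero
      (continuous_primitive (fun _ _ => hFc.intervalIntegrable _ _) 0) hρc ?_
    rw [integral_div, ← hZ, div_self hZ_pos.ne']
end

section
/- Let f be a smooth solution of ∂_t f + u ∂_x f = ν L f on 𝕋², where L = ∂_{yy} - v ∂_y and v = -V'. Then d/dt ⟨u' ∂_x f, ∂_y f⟩ = -ν [ 2⟨u' ∂_{xy} f, L f⟩ + ⟨u'' ∂_x f, L f⟩ + ⟨v u' ∂_x f, L f⟩ ] - ‖u' ∂_x f‖², with all inner products and norms in L²_{ρ∞}(𝕋²). -/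
open Real intervalIntegral
open MeasureTheory Metric

namespace EIC

noncomputable def D (F : ℝ×ℝ×ℝ → ℝ) (e : ℝ×ℝ×ℝ) : ℝ×ℝ×ℝ → ℝ := fun p => fderiv ℝ F p e

def e1 : ℝ×ℝ×ℝ := (1,0,0)
def e2 : ℝ×ℝ×ℝ := (0,1,0)
def e3 : ℝ×ℝ×ℝ := (0,0,1)

lemma dcongr {g h : ℝ → ℝ → ℝ} (H : ∀ x y, g x y = h x y) :
    (∫ x in (0:ℝ)..(2*π), ∫ y in (0:ℝ)..(2*π), g x y)
      = ∫ x in (0:ℝ)..(2*π), ∫ y in (0:ℝ)..(2*π), h x y :=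
  intervalIntegral.integral_congr (fun x _ => intervalIntegral.integral_congr (fun y _ => H x y))

lemma dint_neg {g : ℝ → ℝ → ℝ} :
    (∫ x in (0:ℝ)..(2*π), ∫ y in (0:ℝ)..(2*π), -(g x y))
      = -∫ x in (0:ℝ)..(2*π), ∫ y in (0:ℝ)..(2*π), g x y := by
  simp_rw [intervalIntegral.integral_neg]

lemma dint_const_mul {g : ℝ → ℝ → ℝ} (c : ℝ) :
    (∫ x in (0:ℝ)..(2*π), ∫ y in (0:ℝ)..(2*π), c * g x y)
      = c * ∫ x in (0:ℝ)..(2*π), ∫ y in (0:ℝ)..(2*π), g x y := by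
  simp_rw [intervalIntegral.integral_const_mul]


lemma slice1 {F : ℝ×ℝ×ℝ → ℝ} (hF : Differentiable ℝ F) (t x y : ℝ) :
    HasDerivAt (fun s => F (s, x, y)) (fderiv ℝ F (t,x,y) (1,0,0)) t := by
  have h := (hF (t,x,y)).hasFDerivAt.comp_hasDerivAt t
    ((hasDerivAt_id t).prodMk ((hasDerivAt_const t x).prodMk (hasDerivAt_const t y)))
  simpa [Function.comp_def] using h

lemma slice2 {F : ℝ×ℝ×ℝ → ℝ} (hF : Differentiable ℝ F) (t x y : ℝ) :
    HasDerivAt (fun x' => F (t, x', y)) (fderiv ℝ F (t,x,y) (0,1,0)) x := by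
  have h := (hF (t,x,y)).hasFDerivAt.comp_hasDerivAt x
    ((hasDerivAt_const x t).prodMk ((hasDerivAt_id x).prodMk (hasDerivAt_const x y)))
  simpa [Function.comp_def] using h

lemma slice3 {F : ℝ×ℝ×ℝ → ℝ} (hF : Differentiable ℝ F) (t x y : ℝ) :
    HasDerivAt (fun y' => F (t, x, y')) (fderiv ℝ F (t,x,y) (0,0,1)) y := by
  have h := (hF (t,x,y)).hasFDerivAt.comp_hasDerivAt y
    ((hasDerivAt_const y t).prodMk ((hasDerivAt_const y x).prodMk (hasDerivAt_id y)))
  simpa [Function.comp_def] using h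

lemma contDiff_fderiv_apply {F : ℝ×ℝ×ℝ → ℝ} (hF : ContDiff ℝ (⊤ : ℕ∞) F) (e : ℝ×ℝ×ℝ) :
    ContDiff ℝ (⊤ : ℕ∞) (fun p => fderiv ℝ F p e) :=
  (hF.fderiv_right (by simp)).clm_apply contDiff_const

lemma symm2 {F : ℝ×ℝ×ℝ → ℝ} (hF : ContDiff ℝ (⊤ : ℕ∞) F) (p a b : ℝ×ℝ×ℝ) :
    fderiv ℝ (fun q => fderiv ℝ F q a) p b = fderiv ℝ (fun q => fderiv ℝ F q b) p a := by
  have hd : Differentiable ℝ (fderiv ℝ F) := (hF.fderiv_right (m := (⊤ : ℕ∞)) (by simp)).differentiable (by simp)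
  have h1 : ∀ (c : ℝ×ℝ×ℝ), fderiv ℝ (fun q => fderiv ℝ F q c) p
      = (fderiv ℝ (fderiv ℝ F) p).flip c := by
    intro c
    have := fderiv_clm_apply (hd p) (differentiableAt_const c)
    simpa using this
  have hsymm := second_derivative_symmetric (f' := fderiv ℝ F)
    (f'' := fderiv ℝ (fderiv ℝ F) p) (fun q => (hF.differentiable (by simp) q).hasFDerivAt)
    (hd p).hasFDerivAt a b
  rw [h1 a, h1 b]
  simp [ContinuousLinearMap.flip_apply]
  exact hsymm.symm

lemma fderiv_periodic {F : ℝ×ℝ×ℝ → ℝ} (hF : Differentiable ℝ F) {c : ℝ×ℝ×ℝ}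
    (hper : ∀ q, F (q + c) = F q) (p : ℝ×ℝ×ℝ) :
    fderiv ℝ F (p + c) = fderiv ℝ F p := by
  have h : HasFDerivAt (fun q => F (q + c)) (fderiv ℝ F (p + c)) p := by
    have := (hF (p + c)).hasFDerivAt.comp p
      ((hasFDerivAt_id p).add_const c)
    simpa [Function.comp_def] using this
  have h2 : HasFDerivAt F (fderiv ℝ F (p + c)) p := by
    have : (fun q => F (q + c)) = F := funext hper
    rwa [this] at h
  exact h2.fderiv.symm



/-- integral of derivative of periodic C¹ function over a period is 0 -/
lemma integral_deriv_periodic (g g' : ℝ → ℝ)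
    (hg : ∀ z, HasDerivAt g (g' z) z) (hg' : Continuous g')
    (hper : g (2*π) = g 0) :
    ∫ z in (0:ℝ)..(2*π), g' z = 0 := by
  rw [intervalIntegral.integral_eq_sub_of_hasDerivAt (fun z _ => hg z)
    (hg'.intervalIntegrable _ _), hper, sub_self]

/-- integration by parts for periodic C¹ functions on [0, 2π] -/
lemma ibp_periodic (P Q P' Q' : ℝ → ℝ)
    (hP : ∀ z, HasDerivAt P (P' z) z) (hQ : ∀ z, HasDerivAt Q (Q' z) z)
    (hPc : Continuous P) (hQc : Continuous Q)
    (hP'c : Continuous P') (hQ'c : Continuous Q')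
    (hPper : P (2*π) = P 0) (hQper : Q (2*π) = Q 0) :
    ∫ z in (0:ℝ)..(2*π), P z * Q' z = -∫ z in (0:ℝ)..(2*π), P' z * Q z := by
  have h0 : ∫ z in (0:ℝ)..(2*π), (P' z * Q z + P z * Q' z) = 0 := by
    apply integral_deriv_periodic (fun z => P z * Q z) _
      (fun z => (hP z).mul (hQ z)) (by continuity)
    rw [hPper, hQper]
  have hi1 : IntervalIntegrable (fun z => P' z * Q z) volume 0 (2*π) :=
    (hP'c.mul hQc).intervalIntegrable _ _
  have hi2 : IntervalIntegrable (fun z => P z * Q' z) volume 0 (2*π) :=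
    (hPc.mul hQ'c).intervalIntegrable _ _
  have := intervalIntegral.integral_add hi1 hi2
  rw [h0] at this
  linarith [this]

lemma integrable_on_prod {h : ℝ × ℝ → ℝ} (hc : Continuous h) :
    Integrable (Function.uncurry (fun x y => h (x, y)))
      ((volume.restrict (Set.Ioc (0:ℝ) (2*π))).prod (volume.restrict (Set.Ioc (0:ℝ) (2*π)))) := by
  rw [Measure.prod_restrict]
  have : Function.uncurry (fun x y => h (x, y)) = h := rfl
  rw [this]
  apply (hc.continuousOn.integrableOn_compact (isCompact_Icc.prod isCompact_Icc)).mono_set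
  exact Set.prod_mono Set.Ioc_subset_Icc_self Set.Ioc_subset_Icc_self

/-- swap order of double interval integral for continuous integrands -/
lemma swap_double {h : ℝ → ℝ → ℝ} (hc : Continuous fun p : ℝ×ℝ => h p.1 p.2) :
    ∫ x in (0:ℝ)..(2*π), ∫ y in (0:ℝ)..(2*π), h x y
      = ∫ y in (0:ℝ)..(2*π), ∫ x in (0:ℝ)..(2*π), h x y := by
  have h2π : (0:ℝ) ≤ 2*π := by positivity
  rw [intervalIntegral.integral_of_le h2π, intervalIntegral.integral_of_le h2π]
  simp_rw [intervalIntegral.integral_of_le h2π]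
  exact integral_integral_swap (integrable_on_prod hc)



lemma hasDerivAt_double (G G' : ℝ → ℝ → ℝ → ℝ)
    (hG : Continuous fun p : ℝ×ℝ×ℝ => G p.1 p.2.1 p.2.2)
    (hG' : Continuous fun p : ℝ×ℝ×ℝ => G' p.1 p.2.1 p.2.2)
    (hd : ∀ s x y, HasDerivAt (fun s' => G s' x y) (G' s x y) s) (t : ℝ) :
    HasDerivAt (fun s => ∫ x in (0:ℝ)..(2*π), ∫ y in (0:ℝ)..(2*π), G s x y)
      (∫ x in (0:ℝ)..(2*π), ∫ y in (0:ℝ)..(2*π), G' t x y) t := by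
  have h2π : (0:ℝ) ≤ 2*π := by positivity
  have hIoc : Set.uIoc (0:ℝ) (2*π) = Set.Ioc (0:ℝ) (2*π) := Set.uIoc_of_le h2π
  set K : Set (ℝ×ℝ×ℝ) := Set.Icc (t-1) (t+1) ×ˢ (Set.Icc (0:ℝ) (2*π) ×ˢ Set.Icc (0:ℝ) (2*π))
    with hK
  have hKcomp : IsCompact K := (isCompact_Icc.prod (isCompact_Icc.prod isCompact_Icc))
  obtain ⟨C, hC⟩ := hKcomp.exists_bound_of_continuousOn hG'.continuousOn
  -- membership helper
  have hmem : ∀ s x y, s ∈ ball t 1 → x ∈ Set.Icc (0:ℝ) (2*π) → y ∈ Set.Icc (0:ℝ) (2*π) →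
      |G' s x y| ≤ C := by
    intro s x y hs hx hy
    have hs' : s ∈ Set.Icc (t-1) (t+1) := by
      rw [mem_ball, Real.dist_eq] at hs
      constructor <;> [linarith [abs_lt.mp hs]; linarith [abs_lt.mp hs]]
    have := hC (s, x, y) ⟨hs', hx, hy⟩
    simpa using this
  -- inner derivative
  have inner : ∀ s ∈ ball t 1, ∀ x ∈ Set.Icc (0:ℝ) (2*π),
      HasDerivAt (fun s' => ∫ y in (0:ℝ)..(2*π), G s' x y)
        (∫ y in (0:ℝ)..(2*π), G' s x y) s := by
    intro s hs x hx
    have hε : 0 < 1 - dist s t := by rw [mem_ball] at hs; linarith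
    have hball : ball s (1 - dist s t) ⊆ ball t 1 := by
      intro z hz
      rw [mem_ball] at *
      calc dist z t ≤ dist z s + dist s t := dist_triangle z s t
        _ < (1 - dist s t) + dist s t := by linarith
        _ = 1 := by ring
    refine (intervalIntegral.hasDerivAt_integral_of_dominated_loc_of_deriv_le (ball_mem_nhds s hε)
      (F := fun s' y => G s' x y) (F' := fun s' y => G' s' x y) (bound := fun _ => C)
      ?_ ?_ ?_ ?_ ?_ ?_).2
    · filter_upwards with s'
      exact (hG.comp (continuous_const.prodMk (continuous_const.prodMk continuous_id) : Continuous fun y : ℝ => ((s',x,y) : ℝ×ℝ×ℝ))).aestronglyMeasurable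
    · exact (hG.comp (continuous_const.prodMk (continuous_const.prodMk continuous_id) : Continuous fun y : ℝ => ((s,x,y) : ℝ×ℝ×ℝ))).intervalIntegrable _ _
    · exact (hG'.comp (continuous_const.prodMk (continuous_const.prodMk continuous_id) : Continuous fun y : ℝ => ((s,x,y) : ℝ×ℝ×ℝ))).aestronglyMeasurable
    · filter_upwards with y hy s' hs'
      rw [hIoc] at hy
      exact hmem s' x y (hball hs') hx (Set.Ioc_subset_Icc_self hy)
    · exact intervalIntegrable_const
    · filter_upwards with y _ s' _
      exact hd s' x y
  -- outer derivative
  refine (intervalIntegral.hasDerivAt_integral_of_dominated_loc_of_deriv_le (ball_mem_nhds t one_pos)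
    (F := fun s x => ∫ y in (0:ℝ)..(2*π), G s x y)
    (F' := fun s x => ∫ y in (0:ℝ)..(2*π), G' s x y)
    (bound := fun _ => C * |2*π - 0|) ?_ ?_ ?_ ?_ ?_ ?_).2
  · filter_upwards with s
    have : Continuous fun x => ∫ y in (0:ℝ)..(2*π), G s x y := by
      apply intervalIntegral.continuous_parametric_intervalIntegral_of_continuous'
      exact hG.comp (continuous_const.prodMk (continuous_fst.prodMk continuous_snd) : Continuous fun q : ℝ × ℝ => ((s, q.1, q.2) : ℝ×ℝ×ℝ))
    exact this.aestronglyMeasurable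
  · have : Continuous fun x => ∫ y in (0:ℝ)..(2*π), G t x y := by
      apply intervalIntegral.continuous_parametric_intervalIntegral_of_continuous'
      exact hG.comp (continuous_const.prodMk (continuous_fst.prodMk continuous_snd) : Continuous fun q : ℝ × ℝ => ((t, q.1, q.2) : ℝ×ℝ×ℝ))
    exact this.intervalIntegrable _ _
  · have : Continuous fun x => ∫ y in (0:ℝ)..(2*π), G' t x y := by
      apply intervalIntegral.continuous_parametric_intervalIntegral_of_continuous'
      exact hG'.comp (continuous_const.prodMk (continuous_fst.prodMk continuous_snd) : Continuous fun q : ℝ × ℝ => ((t, q.1, q.2) : ℝ×ℝ×ℝ))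
    exact this.aestronglyMeasurable
  · filter_upwards with x hx s hs
    rw [hIoc] at hx
    apply intervalIntegral.norm_integral_le_of_norm_le_const
    intro y hy
    rw [hIoc] at hy
    simpa using hmem s x y hs (Set.Ioc_subset_Icc_self hx) (Set.Ioc_subset_Icc_self hy)
  · exact intervalIntegrable_const
  · filter_upwards with x hx s hs
    rw [hIoc] at hx
    exact inner s hs x (Set.Ioc_subset_Icc_self hx)


lemma dint_add {g h : ℝ → ℝ → ℝ} (hg : Continuous fun p : ℝ×ℝ => g p.1 p.2)
    (hh : Continuous fun p : ℝ×ℝ => h p.1 p.2) :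
    (∫ x in (0:ℝ)..(2*π), ∫ y in (0:ℝ)..(2*π), (g x y + h x y))
      = (∫ x in (0:ℝ)..(2*π), ∫ y in (0:ℝ)..(2*π), g x y)
        + ∫ x in (0:ℝ)..(2*π), ∫ y in (0:ℝ)..(2*π), h x y := by
  have inner : ∀ x : ℝ, (∫ y in (0:ℝ)..(2*π), (g x y + h x y))
      = (∫ y in (0:ℝ)..(2*π), g x y) + ∫ y in (0:ℝ)..(2*π), h x y := fun x =>
    intervalIntegral.integral_add
      ((hg.comp (Continuous.prodMk_right x)).intervalIntegrable _ _)
      ((hh.comp (Continuous.prodMk_right x)).intervalIntegrable _ _)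
  simp_rw [inner]
  exact intervalIntegral.integral_add
    ((intervalIntegral.continuous_parametric_intervalIntegral_of_continuous'
      (f := fun x y => g x y) hg 0 (2*π)).intervalIntegrable _ _)
    ((intervalIntegral.continuous_parametric_intervalIntegral_of_continuous'
      (f := fun x y => h x y) hh 0 (2*π)).intervalIntegrable _ _)



@[reducible] noncomputable def J (g : ℝ → ℝ → ℝ) : ℝ :=
  ∫ x in (0:ℝ)..(2*π), ∫ y in (0:ℝ)..(2*π), g x y

lemma Jcongr {g h : ℝ → ℝ → ℝ} (H : ∀ x y, g x y = h x y) : J g = J h :=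
  dcongr H

lemma J_neg {g : ℝ → ℝ → ℝ} : J (fun x y => -(g x y)) = -J g := dint_neg

lemma J_const_mul {g : ℝ → ℝ → ℝ} (c : ℝ) : J (fun x y => c * g x y) = c * J g :=
  dint_const_mul c

lemma J_add {g h : ℝ → ℝ → ℝ} (hg : Continuous fun p : ℝ×ℝ => g p.1 p.2)
    (hh : Continuous fun p : ℝ×ℝ => h p.1 p.2) :
    J (fun x y => g x y + h x y) = J g + J h := dint_add hg hh

lemma J_swap {g : ℝ → ℝ → ℝ} (hc : Continuous fun p : ℝ×ℝ => g p.1 p.2) :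
    J g = ∫ y in (0:ℝ)..(2*π), ∫ x in (0:ℝ)..(2*π), g x y := swap_double hc


set_option maxHeartbeats 1000000 in
theorem main (ν : ℝ) (u v ρ : ℝ → ℝ)
    (hu : ContDiff ℝ 2 u) (huper : ∀ z, u (z + 2*π) = u z)
    (hvC : ContDiff ℝ 1 v) (hvper : ∀ z, v (z + 2*π) = v z)
    (hρc : Continuous ρ) (hρper : ∀ z, ρ (z + 2*π) = ρ z)
    (hρd : ∀ z, HasDerivAt ρ (v z * ρ z) z)
    (F : ℝ×ℝ×ℝ → ℝ) (hF : ContDiff ℝ (⊤ : ℕ∞) F)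
    (hpx : ∀ q : ℝ×ℝ×ℝ, F (q + (0,2*π,0)) = F q)
    (hpy : ∀ q : ℝ×ℝ×ℝ, F (q + (0,0,2*π)) = F q)
    (hPDE : ∀ p : ℝ×ℝ×ℝ,
      D F e1 p = ν * (D (D F e3) e3 p - v p.2.2 * D F e3 p) - u p.2.2 * D F e2 p)
    (t : ℝ) :
    HasDerivAt
      (fun s => ∫ x in (0:ℝ)..(2*π), ∫ y in (0:ℝ)..(2*π),
          (deriv u y * D F e2 (s,x,y)) * D F e3 (s,x,y) * ρ y)
      (-ν * (2 * (∫ x in (0:ℝ)..(2*π), ∫ y in (0:ℝ)..(2*π),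
            (deriv u y * D (D F e2) e3 (t,x,y))
              * (D (D F e3) e3 (t,x,y) - v y * D F e3 (t,x,y)) * ρ y)
          + (∫ x in (0:ℝ)..(2*π), ∫ y in (0:ℝ)..(2*π),
            (deriv (deriv u) y * D F e2 (t,x,y))
              * (D (D F e3) e3 (t,x,y) - v y * D F e3 (t,x,y)) * ρ y)
          + (∫ x in (0:ℝ)..(2*π), ∫ y in (0:ℝ)..(2*π),
            (v y * deriv u y * D F e2 (t,x,y))
              * (D (D F e3) e3 (t,x,y) - v y * D F e3 (t,x,y)) * ρ y))
        - ∫ x in (0:ℝ)..(2*π), ∫ y in (0:ℝ)..(2*π),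
            (deriv u y * D F e2 (t,x,y)) ^ 2 * ρ y) t := by
  -- basic differentiability / smoothness
  have hFd : Differentiable ℝ F := hF.differentiable (by simp)
  have hD1s : ContDiff ℝ (⊤ : ℕ∞) (D F e1) := contDiff_fderiv_apply hF e1
  have hD2s : ContDiff ℝ (⊤ : ℕ∞) (D F e2) := contDiff_fderiv_apply hF e2
  have hD3s : ContDiff ℝ (⊤ : ℕ∞) (D F e3) := contDiff_fderiv_apply hF e3
  have hD1d : Differentiable ℝ (D F e1) := hD1s.differentiable (by simp)
  have hD2d : Differentiable ℝ (D F e2) := hD2s.differentiable (by simp)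
  have hD3d : Differentiable ℝ (D F e3) := hD3s.differentiable (by simp)
  have hD22s : ContDiff ℝ (⊤ : ℕ∞) (D (D F e2) e2) := contDiff_fderiv_apply hD2s e2
  have hMs : ContDiff ℝ (⊤ : ℕ∞) (D (D F e2) e3) := contDiff_fderiv_apply hD2s e3
  have hD33s : ContDiff ℝ (⊤ : ℕ∞) (D (D F e3) e3) := contDiff_fderiv_apply hD3s e3
  have hD33d : Differentiable ℝ (D (D F e3) e3) := hD33s.differentiable (by simp)
  have hAs : ContDiff ℝ (⊤ : ℕ∞) (D (D F e2) e1) := contDiff_fderiv_apply hD2s e1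
  have hBs : ContDiff ℝ (⊤ : ℕ∞) (D (D F e3) e1) := contDiff_fderiv_apply hD3s e1
  have hW2s : ContDiff ℝ (⊤ : ℕ∞) (D (D (D F e3) e3) e2) := contDiff_fderiv_apply hD33s e2
  have hW3s : ContDiff ℝ (⊤ : ℕ∞) (D (D (D F e3) e3) e3) := contDiff_fderiv_apply hD33s e3
  -- slice derivatives
  have sl1 : ∀ (G : ℝ×ℝ×ℝ → ℝ), Differentiable ℝ G → ∀ a b c : ℝ,
      HasDerivAt (fun s => G (s,b,c)) (D G e1 (a,b,c)) a := fun G hG a b c => slice1 hG a b c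
  have sl2 : ∀ (G : ℝ×ℝ×ℝ → ℝ), Differentiable ℝ G → ∀ a b c : ℝ,
      HasDerivAt (fun x' => G (a,x',c)) (D G e2 (a,b,c)) b := fun G hG a b c => slice2 hG a b c
  have sl3 : ∀ (G : ℝ×ℝ×ℝ → ℝ), Differentiable ℝ G → ∀ a b c : ℝ,
      HasDerivAt (fun y' => G (a,b,y')) (D G e3 (a,b,c)) c := fun G hG a b c => slice3 hG a b c
  -- symmetry of second derivatives
  have sym : ∀ (a b p : ℝ×ℝ×ℝ), D (D F a) b p = D (D F b) a p := fun a b p => symm2 hF p a b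
  -- periodicity
  have perD : ∀ (G : ℝ×ℝ×ℝ → ℝ), Differentiable ℝ G → ∀ (c : ℝ×ℝ×ℝ),
      (∀ q, G (q+c) = G q) → ∀ e q, D G e (q+c) = D G e q := by
    intro G hG c hper e q
    show fderiv ℝ G (q+c) e = fderiv ℝ G q e
    rw [fderiv_periodic hG hper]
  have p2x : ∀ q, D F e2 (q + (0,2*π,0)) = D F e2 q := perD F hFd _ hpx e2
  have p3x : ∀ q, D F e3 (q + (0,2*π,0)) = D F e3 q := perD F hFd _ hpx e3
  have p2y : ∀ q, D F e2 (q + (0,0,2*π)) = D F e2 q := perD F hFd _ hpy e2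
  have p3y : ∀ q, D F e3 (q + (0,0,2*π)) = D F e3 q := perD F hFd _ hpy e3
  have pD33x : ∀ q, D (D F e3) e3 (q + (0,2*π,0)) = D (D F e3) e3 q := perD _ hD3d _ p3x e3
  have pD33y : ∀ q, D (D F e3) e3 (q + (0,0,2*π)) = D (D F e3) e3 q := perD _ hD3d _ p3y e3
  -- scalar function facts
  have hu1 : ContDiff ℝ 1 (deriv u) := by
    have h : ContDiff ℝ (1+1) u := by norm_num; exact hu
    exact (contDiff_succ_iff_deriv.mp h).2.2
  have hu'c : Continuous (deriv u) := hu1.continuous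
  have hu''c : Continuous (deriv (deriv u)) := by
    have h : ContDiff ℝ (0+1) (deriv u) := by norm_num; exact hu1
    exact ((contDiff_succ_iff_deriv.mp h).2.2).continuous
  have hu'd : ∀ z, HasDerivAt (deriv u) (deriv (deriv u) z) z :=
    fun z => (hu1.differentiable one_ne_zero z).hasDerivAt
  have hud : ∀ z, HasDerivAt u (deriv u z) z :=
    fun z => (hu.differentiable (by norm_num) z).hasDerivAt
  have huc : Continuous u := hu.continuous
  have hv'd : ∀ z, HasDerivAt v (deriv v z) z :=
    fun z => (hvC.differentiable one_ne_zero z).hasDerivAt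
  have hv'c : Continuous (deriv v) := by
    have h : ContDiff ℝ (0+1) v := by norm_num; exact hvC
    exact ((contDiff_succ_iff_deriv.mp h).2.2).continuous
  have hvc : Continuous v := hvC.continuous
  have hu'per : ∀ z, deriv u (z + 2*π) = deriv u z := by
    intro z
    conv_lhs => rw [← deriv_comp_add_const]
    congr 1
    exact funext huper
  -- point algebra
  have hptx : ∀ a c : ℝ, ((a, 2*π, c) : ℝ×ℝ×ℝ) = (a, 0, c) + (0, 2*π, 0) := by
    intro a c; simp [Prod.ext_iff]
  have hpty : ∀ a b : ℝ, ((a, b, 2*π) : ℝ×ℝ×ℝ) = (a, b, 0) + (0, 0, 2*π) := by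
    intro a b; simp [Prod.ext_iff]
  -- continuity of slices
  have cxs : ∀ (g : ℝ×ℝ×ℝ → ℝ), Continuous g → ∀ a c : ℝ, Continuous fun x => g (a,x,c) :=
    fun g hg a c => hg.comp (continuous_const.prodMk (continuous_id.prodMk continuous_const))
  have cys : ∀ (g : ℝ×ℝ×ℝ → ℝ), Continuous g → ∀ a b : ℝ, Continuous fun y => g (a,b,y) :=
    fun g hg a b => hg.comp (continuous_const.prodMk (continuous_const.prodMk continuous_id))
  have icongr : ∀ {g h : ℝ → ℝ}, (∀ z, g z = h z) →
      (∫ z in (0:ℝ)..(2*π), g z) = ∫ z in (0:ℝ)..(2*π), h z :=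
    fun H => intervalIntegral.integral_congr fun z _ => H z
  -- PDE differentiated in x
  have hA : ∀ a b c : ℝ, D (D F e2) e1 (a,b,c)
      = ν * (D (D (D F e3) e3) e2 (a,b,c) - v c * D (D F e2) e3 (a,b,c))
        - u c * D (D F e2) e2 (a,b,c) := by
    intro a b c
    have hfun : (fun x' => D F e1 (a,x',c))
        = fun x' => ν * (D (D F e3) e3 (a,x',c) - v c * D F e3 (a,x',c)) - u c * D F e2 (a,x',c) := by
      funext x'; exact hPDE (a,x',c)
    have hL : HasDerivAt (fun x' => D F e1 (a,x',c)) (D (D F e1) e2 (a,b,c)) b := sl2 _ hD1d a b c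
    rw [hfun] at hL
    have hR : HasDerivAt
        (fun x' => ν * (D (D F e3) e3 (a,x',c) - v c * D F e3 (a,x',c)) - u c * D F e2 (a,x',c))
        (ν * (D (D (D F e3) e3) e2 (a,b,c) - v c * D (D F e3) e2 (a,b,c))
          - u c * D (D F e2) e2 (a,b,c)) b :=
      (((sl2 _ hD33d a b c).sub ((sl2 _ hD3d a b c).const_mul (v c))).const_mul ν).sub
        ((sl2 _ hD2d a b c).const_mul (u c))
    have key := hL.unique hR
    rw [sym e1 e2, sym e3 e2] at key
    exact key
  -- PDE differentiated in y
  have hB : ∀ a b c : ℝ, D (D F e3) e1 (a,b,c)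
      = ν * (D (D (D F e3) e3) e3 (a,b,c)
          - (deriv v c * D F e3 (a,b,c) + v c * D (D F e3) e3 (a,b,c)))
        - (deriv u c * D F e2 (a,b,c) + u c * D (D F e2) e3 (a,b,c)) := by
    intro a b c
    have hfun : (fun y' => D F e1 (a,b,y'))
        = fun y' => ν * (D (D F e3) e3 (a,b,y') - v y' * D F e3 (a,b,y')) - u y' * D F e2 (a,b,y') := by
      funext y'; exact hPDE (a,b,y')
    have hL : HasDerivAt (fun y' => D F e1 (a,b,y')) (D (D F e1) e3 (a,b,c)) c := sl3 _ hD1d a b c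
    rw [hfun] at hL
    have hR : HasDerivAt
        (fun y' => ν * (D (D F e3) e3 (a,b,y') - v y' * D F e3 (a,b,y')) - u y' * D F e2 (a,b,y'))
        (ν * (D (D (D F e3) e3) e3 (a,b,c)
            - (deriv v c * D F e3 (a,b,c) + v c * D (D F e3) e3 (a,b,c)))
          - (deriv u c * D F e2 (a,b,c) + u c * D (D F e2) e3 (a,b,c))) c :=
      (((sl3 _ hD33d a b c).sub ((hv'd c).mul (sl3 _ hD3d a b c))).const_mul ν).sub
        ((hud c).mul (sl3 _ hD2d a b c))
    have key := hL.unique hR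
    rw [sym e1 e3] at key
    exact key
  -- time derivative of the integrand
  have HDG : ∀ s x y : ℝ, HasDerivAt
      (fun s' => (deriv u y * D F e2 (s',x,y)) * D F e3 (s',x,y) * ρ y)
      ((deriv u y * D (D F e2) e1 (s,x,y)) * D F e3 (s,x,y) * ρ y
        + (deriv u y * D F e2 (s,x,y)) * D (D F e3) e1 (s,x,y) * ρ y) s := by
    intro s x y
    have h := (((sl1 _ hD2d s x y).const_mul (deriv u y)).mul (sl1 _ hD3d s x y)).mul_const (ρ y)
    exact h.congr_deriv (by ring)
  -- continuity of the integrand and its time derivative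
  have csnd3 : Continuous fun p : ℝ×ℝ×ℝ => p.2.2 := continuous_snd.comp continuous_snd
  have hGc : Continuous fun p : ℝ×ℝ×ℝ =>
      (deriv u p.2.2 * D F e2 p) * D F e3 p * ρ p.2.2 :=
    (((hu'c.comp csnd3).mul hD2s.continuous).mul hD3s.continuous).mul (hρc.comp csnd3)
  have hG'c : Continuous fun p : ℝ×ℝ×ℝ =>
      (deriv u p.2.2 * D (D F e2) e1 p) * D F e3 p * ρ p.2.2
        + (deriv u p.2.2 * D F e2 p) * D (D F e3) e1 p * ρ p.2.2 :=
    ((((hu'c.comp csnd3).mul hAs.continuous).mul hD3s.continuous).mul (hρc.comp csnd3)).add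
      ((((hu'c.comp csnd3).mul hD2s.continuous).mul hBs.continuous).mul (hρc.comp csnd3))
  have HD := hasDerivAt_double
    (fun s x y => (deriv u y * D F e2 (s,x,y)) * D F e3 (s,x,y) * ρ y)
    (fun s x y => (deriv u y * D (D F e2) e1 (s,x,y)) * D F e3 (s,x,y) * ρ y
      + (deriv u y * D F e2 (s,x,y)) * D (D F e3) e1 (s,x,y) * ρ y)
    hGc hG'c HDG t
  convert HD using 1
  -- pointwise decomposition of the derivative integrand
  have hpt : ∀ x y : ℝ, (deriv u y * D (D F e2) e1 (t,x,y)) * D F e3 (t,x,y) * ρ y + (deriv u y * D F e2 (t,x,y)) * D (D F e3) e1 (t,x,y) * ρ y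
      = (ν * ((deriv u y * ρ y) * ((D (D (D F e3) e3) e2 (t,x,y) - v y * D (D F e2) e3 (t,x,y)) * D F e3 (t,x,y))) + ν * ((deriv u y * ρ y) * (D F e2 (t,x,y) * (D (D (D F e3) e3) e3 (t,x,y) - deriv v y * D F e3 (t,x,y) - v y * D (D F e3) e3 (t,x,y))))) + (-((u y * deriv u y * ρ y) * (D (D F e2) e2 (t,x,y) * D F e3 (t,x,y) + D F e2 (t,x,y) * D (D F e2) e3 (t,x,y))) + -((deriv u y * D F e2 (t,x,y)) ^ 2 * ρ y)) := by
    intro x y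
    rw [hA t x y, hB t x y]
    ring
  -- two-variable continuity facts
  have cT2 : Continuous fun q : ℝ×ℝ => ((t, q.1, q.2) : ℝ×ℝ×ℝ) :=
    continuous_const.prodMk (continuous_fst.prodMk continuous_snd)
  have cD2p : Continuous fun q : ℝ×ℝ => D F e2 (t,q.1,q.2) := hD2s.continuous.comp cT2
  have cD3p : Continuous fun q : ℝ×ℝ => D F e3 (t,q.1,q.2) := hD3s.continuous.comp cT2
  have cD22p : Continuous fun q : ℝ×ℝ => D (D F e2) e2 (t,q.1,q.2) := hD22s.continuous.comp cT2
  have cMp : Continuous fun q : ℝ×ℝ => D (D F e2) e3 (t,q.1,q.2) := hMs.continuous.comp cT2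
  have cD33p : Continuous fun q : ℝ×ℝ => D (D F e3) e3 (t,q.1,q.2) := hD33s.continuous.comp cT2
  have cW2p : Continuous fun q : ℝ×ℝ => D (D (D F e3) e3) e2 (t,q.1,q.2) := hW2s.continuous.comp cT2
  have cW3p : Continuous fun q : ℝ×ℝ => D (D (D F e3) e3) e3 (t,q.1,q.2) := hW3s.continuous.comp cT2
  have cu'p : Continuous fun q : ℝ×ℝ => deriv u q.2 := hu'c.comp continuous_snd
  have cu''p : Continuous fun q : ℝ×ℝ => deriv (deriv u) q.2 := hu''c.comp continuous_snd
  have cup : Continuous fun q : ℝ×ℝ => u q.2 := huc.comp continuous_snd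
  have cvp : Continuous fun q : ℝ×ℝ => v q.2 := hvc.comp continuous_snd
  have cv'p : Continuous fun q : ℝ×ℝ => deriv v q.2 := hv'c.comp continuous_snd
  have cρp : Continuous fun q : ℝ×ℝ => ρ q.2 := hρc.comp continuous_snd
  have hcII : Continuous fun p : ℝ×ℝ => ν * ((deriv u p.2 * ρ p.2) * ((D (D (D F e3) e3) e2 (t,p.1,p.2) - v p.2 * D (D F e2) e3 (t,p.1,p.2)) * D F e3 (t,p.1,p.2))) :=
    continuous_const.mul ((cu'p.mul cρp).mul ((cW2p.sub (cvp.mul cMp)).mul cD3p))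
  have hcIII : Continuous fun p : ℝ×ℝ => ν * ((deriv u p.2 * ρ p.2) * (D F e2 (t,p.1,p.2) * (D (D (D F e3) e3) e3 (t,p.1,p.2) - deriv v p.2 * D F e3 (t,p.1,p.2) - v p.2 * D (D F e3) e3 (t,p.1,p.2)))) :=
    continuous_const.mul ((cu'p.mul cρp).mul
      (cD2p.mul ((cW3p.sub (cv'p.mul cD3p)).sub (cvp.mul cD33p))))
  have hcI : Continuous fun p : ℝ×ℝ => (u p.2 * deriv u p.2 * ρ p.2) * (D (D F e2) e2 (t,p.1,p.2) * D F e3 (t,p.1,p.2) + D F e2 (t,p.1,p.2) * D (D F e2) e3 (t,p.1,p.2)) :=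
    ((cup.mul cu'p).mul cρp).mul ((cD22p.mul cD3p).add (cD2p.mul cMp))
  have hcIV : Continuous fun p : ℝ×ℝ => (deriv u p.2 * D F e2 (t,p.1,p.2)) ^ 2 * ρ p.2 :=
    ((cu'p.mul cD2p).pow 2).mul cρp
  have hcT1p : Continuous fun p : ℝ×ℝ => (deriv u p.2 * D (D F e2) e3 (t,p.1,p.2)) * (D (D F e3) e3 (t,p.1,p.2) - v p.2 * D F e3 (t,p.1,p.2)) * ρ p.2 :=
    ((cu'p.mul cMp).mul (cD33p.sub (cvp.mul cD3p))).mul cρp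
  have hcT2p : Continuous fun p : ℝ×ℝ => (deriv (deriv u) p.2 * D F e2 (t,p.1,p.2)) * (D (D F e3) e3 (t,p.1,p.2) - v p.2 * D F e3 (t,p.1,p.2)) * ρ p.2 :=
    ((cu''p.mul cD2p).mul (cD33p.sub (cvp.mul cD3p))).mul cρp
  have hcT3p : Continuous fun p : ℝ×ℝ => (v p.2 * deriv u p.2 * D F e2 (t,p.1,p.2)) * (D (D F e3) e3 (t,p.1,p.2) - v p.2 * D F e3 (t,p.1,p.2)) * ρ p.2 :=
    (((cvp.mul cu'p).mul cD2p).mul (cD33p.sub (cvp.mul cD3p))).mul cρp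
  have hcCoreII : Continuous fun p : ℝ×ℝ => (deriv u p.2 * ρ p.2) * ((D (D (D F e3) e3) e2 (t,p.1,p.2) - v p.2 * D (D F e2) e3 (t,p.1,p.2)) * D F e3 (t,p.1,p.2)) :=
    (cu'p.mul cρp).mul ((cW2p.sub (cvp.mul cMp)).mul cD3p)
  have hpty0 : ∀ a b : ℝ, ((a, b, 0 + 2*π) : ℝ×ℝ×ℝ) = (a, b, 0) + (0, 0, 2*π) := by
    intro a b; simp [Prod.ext_iff]
  -- term I vanishes
  have Izero : ∀ y : ℝ, (∫ x in (0:ℝ)..(2*π), (u y * deriv u y * ρ y) * (D (D F e2) e2 (t,x,y) * D F e3 (t,x,y) + D F e2 (t,x,y) * D (D F e2) e3 (t,x,y))) = 0 := by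
    intro y
    have hg : ∀ x : ℝ, HasDerivAt (fun x' => D F e2 (t,x',y) * D F e3 (t,x',y))
        (D (D F e2) e2 (t,x,y) * D F e3 (t,x,y) + D F e2 (t,x,y) * D (D F e2) e3 (t,x,y)) x := by
      intro x
      have h := (sl2 _ hD2d t x y).mul (sl2 _ hD3d t x y)
      rwa [sym e3 e2 (t,x,y)] at h
    have hz : (∫ x in (0:ℝ)..(2*π), (D (D F e2) e2 (t,x,y) * D F e3 (t,x,y) + D F e2 (t,x,y) * D (D F e2) e3 (t,x,y))) = 0 := by
      apply integral_deriv_periodic _ _ hg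
      · exact ((cxs _ hD22s.continuous t y).mul (cxs _ hD3s.continuous t y)).add
          ((cxs _ hD2s.continuous t y).mul (cxs _ hMs.continuous t y))
      · show D F e2 (t,2*π,y) * D F e3 (t,2*π,y) = D F e2 (t,0,y) * D F e3 (t,0,y)
        rw [hptx t y, p2x, p3x]
    rw [intervalIntegral.integral_const_mul, hz, mul_zero]
  have EI : J (fun x y => (u y * deriv u y * ρ y) * (D (D F e2) e2 (t,x,y) * D F e3 (t,x,y) + D F e2 (t,x,y) * D (D F e2) e3 (t,x,y))) = 0 := by
    calc J (fun x y => (u y * deriv u y * ρ y) * (D (D F e2) e2 (t,x,y) * D F e3 (t,x,y) + D F e2 (t,x,y) * D (D F e2) e3 (t,x,y)))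
        = ∫ y in (0:ℝ)..(2*π), ∫ x in (0:ℝ)..(2*π), (u y * deriv u y * ρ y) * (D (D F e2) e2 (t,x,y) * D F e3 (t,x,y) + D F e2 (t,x,y) * D (D F e2) e3 (t,x,y)) := J_swap hcI
      _ = ∫ y in (0:ℝ)..(2*π), (0:ℝ) := icongr Izero
      _ = 0 := intervalIntegral.integral_zero
  have EIn : J (fun x y => -((u y * deriv u y * ρ y) * (D (D F e2) e2 (t,x,y) * D F e3 (t,x,y) + D F e2 (t,x,y) * D (D F e2) e3 (t,x,y)))) = 0 := by
    calc J (fun x y => -((u y * deriv u y * ρ y) * (D (D F e2) e2 (t,x,y) * D F e3 (t,x,y) + D F e2 (t,x,y) * D (D F e2) e3 (t,x,y)))) = -(J (fun x y => (u y * deriv u y * ρ y) * (D (D F e2) e2 (t,x,y) * D F e3 (t,x,y) + D F e2 (t,x,y) * D (D F e2) e3 (t,x,y)))) := J_neg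
      _ = -(0:ℝ) := by rw [EI]
      _ = 0 := neg_zero
  have EIVn : J (fun x y => -((deriv u y * D F e2 (t,x,y)) ^ 2 * ρ y)) = -(∫ x in (0:ℝ)..(2*π), ∫ y in (0:ℝ)..(2*π), (deriv u y * D F e2 (t,x,y)) ^ 2 * ρ y) := by
    calc J (fun x y => -((deriv u y * D F e2 (t,x,y)) ^ 2 * ρ y)) = -(J (fun x y => (deriv u y * D F e2 (t,x,y)) ^ 2 * ρ y)) := J_neg
      _ = -(∫ x in (0:ℝ)..(2*π), ∫ y in (0:ℝ)..(2*π), (deriv u y * D F e2 (t,x,y)) ^ 2 * ρ y) := rfl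
  -- term II : integration by parts in x
  have innerII : ∀ y : ℝ, (∫ x in (0:ℝ)..(2*π), (deriv u y * ρ y) * ((D (D (D F e3) e3) e2 (t,x,y) - v y * D (D F e2) e3 (t,x,y)) * D F e3 (t,x,y))) = -(∫ x in (0:ℝ)..(2*π), (deriv u y * D (D F e2) e3 (t,x,y)) * (D (D F e3) e3 (t,x,y) - v y * D F e3 (t,x,y)) * ρ y) := by
    intro y
    have hP : ∀ x : ℝ, HasDerivAt (fun x' => (deriv u y * ρ y) * D F e3 (t,x',y))
        ((deriv u y * ρ y) * D (D F e2) e3 (t,x,y)) x := by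
      intro x
      have h := (sl2 _ hD3d t x y).const_mul (deriv u y * ρ y)
      rwa [sym e3 e2 (t,x,y)] at h
    have hQ : ∀ x : ℝ, HasDerivAt (fun x' => D (D F e3) e3 (t,x',y) - v y * D F e3 (t,x',y))
        (D (D (D F e3) e3) e2 (t,x,y) - v y * D (D F e2) e3 (t,x,y)) x := by
      intro x
      have h := (sl2 _ hD33d t x y).sub ((sl2 _ hD3d t x y).const_mul (v y))
      rwa [sym e3 e2 (t,x,y)] at h
    have hibp := ibp_periodic
      (fun x' => (deriv u y * ρ y) * D F e3 (t,x',y))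
      (fun x' => D (D F e3) e3 (t,x',y) - v y * D F e3 (t,x',y))
      (fun x' => (deriv u y * ρ y) * D (D F e2) e3 (t,x',y))
      (fun x' => D (D (D F e3) e3) e2 (t,x',y) - v y * D (D F e2) e3 (t,x',y))
      hP hQ
      (continuous_const.mul (cxs _ hD3s.continuous t y))
      ((cxs _ hD33s.continuous t y).sub (continuous_const.mul (cxs _ hD3s.continuous t y)))
      (continuous_const.mul (cxs _ hMs.continuous t y))
      ((cxs _ hW2s.continuous t y).sub (continuous_const.mul (cxs _ hMs.continuous t y)))
      (by show (deriv u y * ρ y) * D F e3 (t,2*π,y) = (deriv u y * ρ y) * D F e3 (t,0,y)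
          rw [hptx t y, p3x])
      (by show D (D F e3) e3 (t,2*π,y) - v y * D F e3 (t,2*π,y)
              = D (D F e3) e3 (t,0,y) - v y * D F e3 (t,0,y)
          rw [hptx t y, pD33x, p3x])
    calc (∫ x in (0:ℝ)..(2*π), (deriv u y * ρ y) * ((D (D (D F e3) e3) e2 (t,x,y) - v y * D (D F e2) e3 (t,x,y)) * D F e3 (t,x,y)))
        = ∫ x in (0:ℝ)..(2*π), (((deriv u y * ρ y) * D F e3 (t,x,y)) * (D (D (D F e3) e3) e2 (t,x,y) - v y * D (D F e2) e3 (t,x,y))) := icongr (fun x => by ring)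
      _ = -(∫ x in (0:ℝ)..(2*π), (((deriv u y * ρ y) * D (D F e2) e3 (t,x,y)) * (D (D F e3) e3 (t,x,y) - v y * D F e3 (t,x,y)))) := hibp
      _ = -(∫ x in (0:ℝ)..(2*π), (deriv u y * D (D F e2) e3 (t,x,y)) * (D (D F e3) e3 (t,x,y) - v y * D F e3 (t,x,y)) * ρ y) := congrArg Neg.neg (icongr (fun x => by ring))
  have EII : J (fun x y => ν * ((deriv u y * ρ y) * ((D (D (D F e3) e3) e2 (t,x,y) - v y * D (D F e2) e3 (t,x,y)) * D F e3 (t,x,y)))) = -(ν * (∫ x in (0:ℝ)..(2*π), ∫ y in (0:ℝ)..(2*π), (deriv u y * D (D F e2) e3 (t,x,y)) * (D (D F e3) e3 (t,x,y) - v y * D F e3 (t,x,y)) * ρ y)) := by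
    calc J (fun x y => ν * ((deriv u y * ρ y) * ((D (D (D F e3) e3) e2 (t,x,y) - v y * D (D F e2) e3 (t,x,y)) * D F e3 (t,x,y))))
        = ν * J (fun x y => (deriv u y * ρ y) * ((D (D (D F e3) e3) e2 (t,x,y) - v y * D (D F e2) e3 (t,x,y)) * D F e3 (t,x,y))) := J_const_mul ν
      _ = ν * (∫ y in (0:ℝ)..(2*π), ∫ x in (0:ℝ)..(2*π), (deriv u y * ρ y) * ((D (D (D F e3) e3) e2 (t,x,y) - v y * D (D F e2) e3 (t,x,y)) * D F e3 (t,x,y))) := congrArg (fun r : ℝ => ν * r) (J_swap hcCoreII)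
      _ = ν * (∫ y in (0:ℝ)..(2*π), -(∫ x in (0:ℝ)..(2*π), (deriv u y * D (D F e2) e3 (t,x,y)) * (D (D F e3) e3 (t,x,y) - v y * D F e3 (t,x,y)) * ρ y)) := congrArg (fun r : ℝ => ν * r) (icongr innerII)
      _ = ν * -(∫ y in (0:ℝ)..(2*π), ∫ x in (0:ℝ)..(2*π), (deriv u y * D (D F e2) e3 (t,x,y)) * (D (D F e3) e3 (t,x,y) - v y * D F e3 (t,x,y)) * ρ y) := congrArg (fun r : ℝ => ν * r) intervalIntegral.integral_neg
      _ = ν * -(J (fun x y => (deriv u y * D (D F e2) e3 (t,x,y)) * (D (D F e3) e3 (t,x,y) - v y * D F e3 (t,x,y)) * ρ y)) :=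
          congrArg (fun r : ℝ => ν * r) (congrArg Neg.neg (J_swap hcT1p).symm)
      _ = -(ν * (∫ x in (0:ℝ)..(2*π), ∫ y in (0:ℝ)..(2*π), (deriv u y * D (D F e2) e3 (t,x,y)) * (D (D F e3) e3 (t,x,y) - v y * D F e3 (t,x,y)) * ρ y)) := by
          show ν * -(∫ x in (0:ℝ)..(2*π), ∫ y in (0:ℝ)..(2*π), (deriv u y * D (D F e2) e3 (t,x,y)) * (D (D F e3) e3 (t,x,y) - v y * D F e3 (t,x,y)) * ρ y) = -(ν * (∫ x in (0:ℝ)..(2*π), ∫ y in (0:ℝ)..(2*π), (deriv u y * D (D F e2) e3 (t,x,y)) * (D (D F e3) e3 (t,x,y) - v y * D F e3 (t,x,y)) * ρ y))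
          ring
  -- term III : integration by parts in y
  have innerIII : ∀ x : ℝ, (∫ y in (0:ℝ)..(2*π), (deriv u y * ρ y) * (D F e2 (t,x,y) * (D (D (D F e3) e3) e3 (t,x,y) - deriv v y * D F e3 (t,x,y) - v y * D (D F e3) e3 (t,x,y))))
      = -((∫ y in (0:ℝ)..(2*π), (deriv u y * D (D F e2) e3 (t,x,y)) * (D (D F e3) e3 (t,x,y) - v y * D F e3 (t,x,y)) * ρ y) + ((∫ y in (0:ℝ)..(2*π), (deriv (deriv u) y * D F e2 (t,x,y)) * (D (D F e3) e3 (t,x,y) - v y * D F e3 (t,x,y)) * ρ y) + (∫ y in (0:ℝ)..(2*π), (v y * deriv u y * D F e2 (t,x,y)) * (D (D F e3) e3 (t,x,y) - v y * D F e3 (t,x,y)) * ρ y))) := by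
    intro x
    have cD2y := cys _ hD2s.continuous t x
    have cD3y := cys _ hD3s.continuous t x
    have cMy := cys _ hMs.continuous t x
    have cD33y := cys _ hD33s.continuous t x
    have cW3y := cys _ hW3s.continuous t x
    have hiT1 : IntervalIntegrable (fun y => (deriv u y * D (D F e2) e3 (t,x,y)) * (D (D F e3) e3 (t,x,y) - v y * D F e3 (t,x,y)) * ρ y) volume 0 (2*π) :=
      ((((hu'c.mul cMy).mul (cD33y.sub (hvc.mul cD3y))).mul hρc)).intervalIntegrable _ _
    have hiT2 : IntervalIntegrable (fun y => (deriv (deriv u) y * D F e2 (t,x,y)) * (D (D F e3) e3 (t,x,y) - v y * D F e3 (t,x,y)) * ρ y) volume 0 (2*π) :=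
      ((((hu''c.mul cD2y).mul (cD33y.sub (hvc.mul cD3y))).mul hρc)).intervalIntegrable _ _
    have hiT3 : IntervalIntegrable (fun y => (v y * deriv u y * D F e2 (t,x,y)) * (D (D F e3) e3 (t,x,y) - v y * D F e3 (t,x,y)) * ρ y) volume 0 (2*π) :=
      (((((hvc.mul hu'c).mul cD2y).mul (cD33y.sub (hvc.mul cD3y))).mul hρc)).intervalIntegrable _ _
    have hP : ∀ z : ℝ, HasDerivAt (fun y' => (deriv u y' * D F e2 (t,x,y')) * ρ y')
        ((deriv (deriv u) z * D F e2 (t,x,z) + deriv u z * D (D F e2) e3 (t,x,z)) * ρ z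
          + (deriv u z * D F e2 (t,x,z)) * (v z * ρ z)) z :=
      fun z => ((hu'd z).mul (sl3 _ hD2d t x z)).mul (hρd z)
    have hQ : ∀ z : ℝ, HasDerivAt (fun y' => D (D F e3) e3 (t,x,y') - v y' * D F e3 (t,x,y'))
        (D (D (D F e3) e3) e3 (t,x,z)
          - (deriv v z * D F e3 (t,x,z) + v z * D (D F e3) e3 (t,x,z))) z :=
      fun z => (sl3 _ hD33d t x z).sub ((hv'd z).mul (sl3 _ hD3d t x z))
    have hibp := ibp_periodic
      (fun y' => (deriv u y' * D F e2 (t,x,y')) * ρ y')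
      (fun y' => D (D F e3) e3 (t,x,y') - v y' * D F e3 (t,x,y'))
      (fun z => (deriv (deriv u) z * D F e2 (t,x,z) + deriv u z * D (D F e2) e3 (t,x,z)) * ρ z
        + (deriv u z * D F e2 (t,x,z)) * (v z * ρ z))
      (fun z => D (D (D F e3) e3) e3 (t,x,z)
        - (deriv v z * D F e3 (t,x,z) + v z * D (D F e3) e3 (t,x,z)))
      hP hQ
      ((hu'c.mul cD2y).mul hρc)
      (cD33y.sub (hvc.mul cD3y))
      ((((hu''c.mul cD2y).add (hu'c.mul cMy)).mul hρc).add
        ((hu'c.mul cD2y).mul (hvc.mul hρc)))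
      (cW3y.sub ((hv'c.mul cD3y).add (hvc.mul cD33y)))
      (by show (deriv u (2*π) * D F e2 (t,x,2*π)) * ρ (2*π) = (deriv u 0 * D F e2 (t,x,0)) * ρ 0
          rw [show (2*π:ℝ) = 0 + 2*π from by ring, hu'per 0, hρper 0, hpty0 t x, p2y])
      (by show D (D F e3) e3 (t,x,2*π) - v (2*π) * D F e3 (t,x,2*π)
              = D (D F e3) e3 (t,x,0) - v 0 * D F e3 (t,x,0)
          rw [show (2*π:ℝ) = 0 + 2*π from by ring, hvper 0, hpty0 t x, pD33y, p3y])
    calc (∫ y in (0:ℝ)..(2*π), (deriv u y * ρ y) * (D F e2 (t,x,y) * (D (D (D F e3) e3) e3 (t,x,y) - deriv v y * D F e3 (t,x,y) - v y * D (D F e3) e3 (t,x,y))))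
        = ∫ y in (0:ℝ)..(2*π), (((deriv u y * D F e2 (t,x,y)) * ρ y)
            * (D (D (D F e3) e3) e3 (t,x,y) - (deriv v y * D F e3 (t,x,y) + v y * D (D F e3) e3 (t,x,y)))) := icongr (fun y => by ring)
      _ = -(∫ y in (0:ℝ)..(2*π), (((deriv (deriv u) y * D F e2 (t,x,y) + deriv u y * D (D F e2) e3 (t,x,y)) * ρ y
            + (deriv u y * D F e2 (t,x,y)) * (v y * ρ y))
            * (D (D F e3) e3 (t,x,y) - v y * D F e3 (t,x,y)))) := hibp
      _ = -(∫ y in (0:ℝ)..(2*π), ((deriv u y * D (D F e2) e3 (t,x,y)) * (D (D F e3) e3 (t,x,y) - v y * D F e3 (t,x,y)) * ρ y + ((deriv (deriv u) y * D F e2 (t,x,y)) * (D (D F e3) e3 (t,x,y) - v y * D F e3 (t,x,y)) * ρ y + (v y * deriv u y * D F e2 (t,x,y)) * (D (D F e3) e3 (t,x,y) - v y * D F e3 (t,x,y)) * ρ y))) := congrArg Neg.neg (icongr (fun y => by ring))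
      _ = -((∫ y in (0:ℝ)..(2*π), (deriv u y * D (D F e2) e3 (t,x,y)) * (D (D F e3) e3 (t,x,y) - v y * D F e3 (t,x,y)) * ρ y) + (∫ y in (0:ℝ)..(2*π), ((deriv (deriv u) y * D F e2 (t,x,y)) * (D (D F e3) e3 (t,x,y) - v y * D F e3 (t,x,y)) * ρ y + (v y * deriv u y * D F e2 (t,x,y)) * (D (D F e3) e3 (t,x,y) - v y * D F e3 (t,x,y)) * ρ y))) :=
          congrArg Neg.neg (intervalIntegral.integral_add hiT1 (hiT2.add hiT3))
      _ = -((∫ y in (0:ℝ)..(2*π), (deriv u y * D (D F e2) e3 (t,x,y)) * (D (D F e3) e3 (t,x,y) - v y * D F e3 (t,x,y)) * ρ y) + ((∫ y in (0:ℝ)..(2*π), (deriv (deriv u) y * D F e2 (t,x,y)) * (D (D F e3) e3 (t,x,y) - v y * D F e3 (t,x,y)) * ρ y) + (∫ y in (0:ℝ)..(2*π), (v y * deriv u y * D F e2 (t,x,y)) * (D (D F e3) e3 (t,x,y) - v y * D F e3 (t,x,y)) * ρ y))) := by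
          rw [intervalIntegral.integral_add hiT2 hiT3]
  have hIR1 : IntervalIntegrable (fun x => ∫ y in (0:ℝ)..(2*π), (deriv u y * D (D F e2) e3 (t,x,y)) * (D (D F e3) e3 (t,x,y) - v y * D F e3 (t,x,y)) * ρ y) volume 0 (2*π) :=
    (intervalIntegral.continuous_parametric_intervalIntegral_of_continuous'
      (f := fun x y => (deriv u y * D (D F e2) e3 (t,x,y)) * (D (D F e3) e3 (t,x,y) - v y * D F e3 (t,x,y)) * ρ y) hcT1p 0 (2*π)).intervalIntegrable _ _
  have hIR2 : IntervalIntegrable (fun x => ∫ y in (0:ℝ)..(2*π), (deriv (deriv u) y * D F e2 (t,x,y)) * (D (D F e3) e3 (t,x,y) - v y * D F e3 (t,x,y)) * ρ y) volume 0 (2*π) :=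
    (intervalIntegral.continuous_parametric_intervalIntegral_of_continuous'
      (f := fun x y => (deriv (deriv u) y * D F e2 (t,x,y)) * (D (D F e3) e3 (t,x,y) - v y * D F e3 (t,x,y)) * ρ y) hcT2p 0 (2*π)).intervalIntegrable _ _
  have hIR3 : IntervalIntegrable (fun x => ∫ y in (0:ℝ)..(2*π), (v y * deriv u y * D F e2 (t,x,y)) * (D (D F e3) e3 (t,x,y) - v y * D F e3 (t,x,y)) * ρ y) volume 0 (2*π) :=
    (intervalIntegral.continuous_parametric_intervalIntegral_of_continuous'
      (f := fun x y => (v y * deriv u y * D F e2 (t,x,y)) * (D (D F e3) e3 (t,x,y) - v y * D F e3 (t,x,y)) * ρ y) hcT3p 0 (2*π)).intervalIntegrable _ _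
  have EIII : J (fun x y => ν * ((deriv u y * ρ y) * (D F e2 (t,x,y) * (D (D (D F e3) e3) e3 (t,x,y) - deriv v y * D F e3 (t,x,y) - v y * D (D F e3) e3 (t,x,y))))) = -(ν * ((∫ x in (0:ℝ)..(2*π), ∫ y in (0:ℝ)..(2*π), (deriv u y * D (D F e2) e3 (t,x,y)) * (D (D F e3) e3 (t,x,y) - v y * D F e3 (t,x,y)) * ρ y) + (((∫ x in (0:ℝ)..(2*π), ∫ y in (0:ℝ)..(2*π), (deriv (deriv u) y * D F e2 (t,x,y)) * (D (D F e3) e3 (t,x,y) - v y * D F e3 (t,x,y)) * ρ y)) + ((∫ x in (0:ℝ)..(2*π), ∫ y in (0:ℝ)..(2*π), (v y * deriv u y * D F e2 (t,x,y)) * (D (D F e3) e3 (t,x,y) - v y * D F e3 (t,x,y)) * ρ y))))) := by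
    calc J (fun x y => ν * ((deriv u y * ρ y) * (D F e2 (t,x,y) * (D (D (D F e3) e3) e3 (t,x,y) - deriv v y * D F e3 (t,x,y) - v y * D (D F e3) e3 (t,x,y)))))
        = ν * J (fun x y => (deriv u y * ρ y) * (D F e2 (t,x,y) * (D (D (D F e3) e3) e3 (t,x,y) - deriv v y * D F e3 (t,x,y) - v y * D (D F e3) e3 (t,x,y)))) := J_const_mul ν
      _ = ν * (∫ x in (0:ℝ)..(2*π), -((∫ y in (0:ℝ)..(2*π), (deriv u y * D (D F e2) e3 (t,x,y)) * (D (D F e3) e3 (t,x,y) - v y * D F e3 (t,x,y)) * ρ y) + ((∫ y in (0:ℝ)..(2*π), (deriv (deriv u) y * D F e2 (t,x,y)) * (D (D F e3) e3 (t,x,y) - v y * D F e3 (t,x,y)) * ρ y) + (∫ y in (0:ℝ)..(2*π), (v y * deriv u y * D F e2 (t,x,y)) * (D (D F e3) e3 (t,x,y) - v y * D F e3 (t,x,y)) * ρ y)))) :=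
          congrArg (fun r : ℝ => ν * r) (icongr innerIII)
      _ = ν * -(∫ x in (0:ℝ)..(2*π), ((∫ y in (0:ℝ)..(2*π), (deriv u y * D (D F e2) e3 (t,x,y)) * (D (D F e3) e3 (t,x,y) - v y * D F e3 (t,x,y)) * ρ y) + ((∫ y in (0:ℝ)..(2*π), (deriv (deriv u) y * D F e2 (t,x,y)) * (D (D F e3) e3 (t,x,y) - v y * D F e3 (t,x,y)) * ρ y) + (∫ y in (0:ℝ)..(2*π), (v y * deriv u y * D F e2 (t,x,y)) * (D (D F e3) e3 (t,x,y) - v y * D F e3 (t,x,y)) * ρ y)))) :=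
          congrArg (fun r : ℝ => ν * r) intervalIntegral.integral_neg
      _ = ν * -((∫ x in (0:ℝ)..(2*π), ∫ y in (0:ℝ)..(2*π), (deriv u y * D (D F e2) e3 (t,x,y)) * (D (D F e3) e3 (t,x,y) - v y * D F e3 (t,x,y)) * ρ y) + (∫ x in (0:ℝ)..(2*π), ((∫ y in (0:ℝ)..(2*π), (deriv (deriv u) y * D F e2 (t,x,y)) * (D (D F e3) e3 (t,x,y) - v y * D F e3 (t,x,y)) * ρ y) + (∫ y in (0:ℝ)..(2*π), (v y * deriv u y * D F e2 (t,x,y)) * (D (D F e3) e3 (t,x,y) - v y * D F e3 (t,x,y)) * ρ y)))) :=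
          congrArg (fun r : ℝ => ν * r)
            (congrArg Neg.neg (intervalIntegral.integral_add hIR1 (hIR2.add hIR3)))
      _ = ν * -((∫ x in (0:ℝ)..(2*π), ∫ y in (0:ℝ)..(2*π), (deriv u y * D (D F e2) e3 (t,x,y)) * (D (D F e3) e3 (t,x,y) - v y * D F e3 (t,x,y)) * ρ y) + ((∫ x in (0:ℝ)..(2*π), ∫ y in (0:ℝ)..(2*π), (deriv (deriv u) y * D F e2 (t,x,y)) * (D (D F e3) e3 (t,x,y) - v y * D F e3 (t,x,y)) * ρ y) + (∫ x in (0:ℝ)..(2*π), ∫ y in (0:ℝ)..(2*π), (v y * deriv u y * D F e2 (t,x,y)) * (D (D F e3) e3 (t,x,y) - v y * D F e3 (t,x,y)) * ρ y))) := by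
          rw [intervalIntegral.integral_add hIR2 hIR3]
      _ = -(ν * ((∫ x in (0:ℝ)..(2*π), ∫ y in (0:ℝ)..(2*π), (deriv u y * D (D F e2) e3 (t,x,y)) * (D (D F e3) e3 (t,x,y) - v y * D F e3 (t,x,y)) * ρ y) + (((∫ x in (0:ℝ)..(2*π), ∫ y in (0:ℝ)..(2*π), (deriv (deriv u) y * D F e2 (t,x,y)) * (D (D F e3) e3 (t,x,y) - v y * D F e3 (t,x,y)) * ρ y)) + ((∫ x in (0:ℝ)..(2*π), ∫ y in (0:ℝ)..(2*π), (v y * deriv u y * D F e2 (t,x,y)) * (D (D F e3) e3 (t,x,y) - v y * D F e3 (t,x,y)) * ρ y))))) := by ring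
  have s1 : J (fun x y => ν * ((deriv u y * ρ y) * ((D (D (D F e3) e3) e2 (t,x,y) - v y * D (D F e2) e3 (t,x,y)) * D F e3 (t,x,y))) + ν * ((deriv u y * ρ y) * (D F e2 (t,x,y) * (D (D (D F e3) e3) e3 (t,x,y) - deriv v y * D F e3 (t,x,y) - v y * D (D F e3) e3 (t,x,y)))))
      = J (fun x y => ν * ((deriv u y * ρ y) * ((D (D (D F e3) e3) e2 (t,x,y) - v y * D (D F e2) e3 (t,x,y)) * D F e3 (t,x,y)))) + J (fun x y => ν * ((deriv u y * ρ y) * (D F e2 (t,x,y) * (D (D (D F e3) e3) e3 (t,x,y) - deriv v y * D F e3 (t,x,y) - v y * D (D F e3) e3 (t,x,y))))) := J_add hcII hcIII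
  have s2 : J (fun x y => -((u y * deriv u y * ρ y) * (D (D F e2) e2 (t,x,y) * D F e3 (t,x,y) + D F e2 (t,x,y) * D (D F e2) e3 (t,x,y))) + -((deriv u y * D F e2 (t,x,y)) ^ 2 * ρ y))
      = J (fun x y => -((u y * deriv u y * ρ y) * (D (D F e2) e2 (t,x,y) * D F e3 (t,x,y) + D F e2 (t,x,y) * D (D F e2) e3 (t,x,y)))) + J (fun x y => -((deriv u y * D F e2 (t,x,y)) ^ 2 * ρ y)) := J_add hcI.neg hcIV.neg
  have hval : J (fun x y => (deriv u y * D (D F e2) e1 (t,x,y)) * D F e3 (t,x,y) * ρ y + (deriv u y * D F e2 (t,x,y)) * D (D F e3) e1 (t,x,y) * ρ y)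
      = -ν * (2 * (∫ x in (0:ℝ)..(2*π), ∫ y in (0:ℝ)..(2*π), (deriv u y * D (D F e2) e3 (t,x,y)) * (D (D F e3) e3 (t,x,y) - v y * D F e3 (t,x,y)) * ρ y) + (∫ x in (0:ℝ)..(2*π), ∫ y in (0:ℝ)..(2*π), (deriv (deriv u) y * D F e2 (t,x,y)) * (D (D F e3) e3 (t,x,y) - v y * D F e3 (t,x,y)) * ρ y) + (∫ x in (0:ℝ)..(2*π), ∫ y in (0:ℝ)..(2*π), (v y * deriv u y * D F e2 (t,x,y)) * (D (D F e3) e3 (t,x,y) - v y * D F e3 (t,x,y)) * ρ y)) - (∫ x in (0:ℝ)..(2*π), ∫ y in (0:ℝ)..(2*π), (deriv u y * D F e2 (t,x,y)) ^ 2 * ρ y) := by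
    calc J (fun x y => (deriv u y * D (D F e2) e1 (t,x,y)) * D F e3 (t,x,y) * ρ y + (deriv u y * D F e2 (t,x,y)) * D (D F e3) e1 (t,x,y) * ρ y)
        = J (fun x y => (ν * ((deriv u y * ρ y) * ((D (D (D F e3) e3) e2 (t,x,y) - v y * D (D F e2) e3 (t,x,y)) * D F e3 (t,x,y))) + ν * ((deriv u y * ρ y) * (D F e2 (t,x,y) * (D (D (D F e3) e3) e3 (t,x,y) - deriv v y * D F e3 (t,x,y) - v y * D (D F e3) e3 (t,x,y))))) + (-((u y * deriv u y * ρ y) * (D (D F e2) e2 (t,x,y) * D F e3 (t,x,y) + D F e2 (t,x,y) * D (D F e2) e3 (t,x,y))) + -((deriv u y * D F e2 (t,x,y)) ^ 2 * ρ y))) := Jcongr hpt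
      _ = J (fun x y => ν * ((deriv u y * ρ y) * ((D (D (D F e3) e3) e2 (t,x,y) - v y * D (D F e2) e3 (t,x,y)) * D F e3 (t,x,y))) + ν * ((deriv u y * ρ y) * (D F e2 (t,x,y) * (D (D (D F e3) e3) e3 (t,x,y) - deriv v y * D F e3 (t,x,y) - v y * D (D F e3) e3 (t,x,y))))) + J (fun x y => -((u y * deriv u y * ρ y) * (D (D F e2) e2 (t,x,y) * D F e3 (t,x,y) + D F e2 (t,x,y) * D (D F e2) e3 (t,x,y))) + -((deriv u y * D F e2 (t,x,y)) ^ 2 * ρ y)) :=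
          J_add (hcII.add hcIII) ((hcI.neg).add (hcIV.neg))
      _ = (J (fun x y => ν * ((deriv u y * ρ y) * ((D (D (D F e3) e3) e2 (t,x,y) - v y * D (D F e2) e3 (t,x,y)) * D F e3 (t,x,y)))) + J (fun x y => ν * ((deriv u y * ρ y) * (D F e2 (t,x,y) * (D (D (D F e3) e3) e3 (t,x,y) - deriv v y * D F e3 (t,x,y) - v y * D (D F e3) e3 (t,x,y))))))
            + (J (fun x y => -((u y * deriv u y * ρ y) * (D (D F e2) e2 (t,x,y) * D F e3 (t,x,y) + D F e2 (t,x,y) * D (D F e2) e3 (t,x,y)))) + J (fun x y => -((deriv u y * D F e2 (t,x,y)) ^ 2 * ρ y))) := by rw [s1, s2]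
      _ = (-(ν * (∫ x in (0:ℝ)..(2*π), ∫ y in (0:ℝ)..(2*π), (deriv u y * D (D F e2) e3 (t,x,y)) * (D (D F e3) e3 (t,x,y) - v y * D F e3 (t,x,y)) * ρ y)) + -(ν * ((∫ x in (0:ℝ)..(2*π), ∫ y in (0:ℝ)..(2*π), (deriv u y * D (D F e2) e3 (t,x,y)) * (D (D F e3) e3 (t,x,y) - v y * D F e3 (t,x,y)) * ρ y) + (((∫ x in (0:ℝ)..(2*π), ∫ y in (0:ℝ)..(2*π), (deriv (deriv u) y * D F e2 (t,x,y)) * (D (D F e3) e3 (t,x,y) - v y * D F e3 (t,x,y)) * ρ y)) + ((∫ x in (0:ℝ)..(2*π), ∫ y in (0:ℝ)..(2*π), (v y * deriv u y * D F e2 (t,x,y)) * (D (D F e3) e3 (t,x,y) - v y * D F e3 (t,x,y)) * ρ y)))))) + ((0:ℝ) + -(∫ x in (0:ℝ)..(2*π), ∫ y in (0:ℝ)..(2*π), (deriv u y * D F e2 (t,x,y)) ^ 2 * ρ y)) := by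
          rw [EII, EIII, EIn, EIVn]
      _ = -ν * (2 * (∫ x in (0:ℝ)..(2*π), ∫ y in (0:ℝ)..(2*π), (deriv u y * D (D F e2) e3 (t,x,y)) * (D (D F e3) e3 (t,x,y) - v y * D F e3 (t,x,y)) * ρ y) + (∫ x in (0:ℝ)..(2*π), ∫ y in (0:ℝ)..(2*π), (deriv (deriv u) y * D F e2 (t,x,y)) * (D (D F e3) e3 (t,x,y) - v y * D F e3 (t,x,y)) * ρ y) + (∫ x in (0:ℝ)..(2*π), ∫ y in (0:ℝ)..(2*π), (v y * deriv u y * D F e2 (t,x,y)) * (D (D F e3) e3 (t,x,y) - v y * D F e3 (t,x,y)) * ρ y)) - (∫ x in (0:ℝ)..(2*π), ∫ y in (0:ℝ)..(2*π), (deriv u y * D F e2 (t,x,y)) ^ 2 * ρ y) := by ring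
  exact hval.symm
end EIC

open EIC in
/-- For a smooth solution of `∂_t f + u ∂_x f = ν L f` with
`L = ∂_yy - v ∂_y`, the cross term satisfies
`d/dt ⟨u' ∂_x f, ∂_y f⟩ = -ν[2⟨u' ∂_xy f, Lf⟩ + ⟨u'' ∂_x f, Lf⟩
  + ⟨v u' ∂_x f, Lf⟩] - ‖u' ∂_x f‖²`. -/
theorem energy_identity_cross
    (ν : ℝ) (hν : 0 < ν)
    (u : ℝ → ℝ) (hu : ContDiff ℝ 2 u) (huper : Function.Periodic u (2 * π))
    (V : ℝ → ℝ) (hV : ContDiff ℝ 2 V) (hVper : Function.Periodic V (2 * π))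
    (v : ℝ → ℝ) (hv : ∀ y, v y = -deriv V y)
    (Z : ℝ) (hZ : Z = ∫ y in (0:ℝ)..(2 * π), Real.exp (-V y))
    (ρ : ℝ → ℝ) (hρ : ∀ y, ρ y = Real.exp (-V y) / Z)
    (f : ℝ → ℝ → ℝ → ℝ)
    (hf : ContDiff ℝ (⊤ : ℕ∞) (fun p : ℝ × ℝ × ℝ => f p.1 p.2.1 p.2.2))
    (hfx : ∀ t x y, f t (x + 2 * π) y = f t x y)
    (hfy : ∀ t x y, f t x (y + 2 * π) = f t x y)
    (hPDE : ∀ t x y,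
      deriv (fun s => f s x y) t + u y * deriv (fun x' => f t x' y) x
        = ν * (deriv (deriv (fun y' => f t x y')) y
            - v y * deriv (fun y' => f t x y') y)) :
    ∀ t, HasDerivAt
      (fun s => ∫ x in (0:ℝ)..(2 * π), ∫ y in (0:ℝ)..(2 * π),
          (deriv u y * deriv (fun x' => f s x' y) x)
            * deriv (fun y' => f s x y') y * ρ y)
      (-ν * (2 * (∫ x in (0:ℝ)..(2 * π), ∫ y in (0:ℝ)..(2 * π),
            (deriv u y * deriv (fun y' => deriv (fun x' => f t x' y') x) y)
              * (deriv (deriv (fun y' => f t x y')) y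
                  - v y * deriv (fun y' => f t x y') y) * ρ y)
          + (∫ x in (0:ℝ)..(2 * π), ∫ y in (0:ℝ)..(2 * π),
            (deriv (deriv u) y * deriv (fun x' => f t x' y) x)
              * (deriv (deriv (fun y' => f t x y')) y
                  - v y * deriv (fun y' => f t x y') y) * ρ y)
          + (∫ x in (0:ℝ)..(2 * π), ∫ y in (0:ℝ)..(2 * π),
            (v y * deriv u y * deriv (fun x' => f t x' y) x)
              * (deriv (deriv (fun y' => f t x y')) y
                  - v y * deriv (fun y' => f t x y') y) * ρ y))
        - ∫ x in (0:ℝ)..(2 * π), ∫ y in (0:ℝ)..(2 * π),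
            (deriv u y * deriv (fun x' => f t x' y) x) ^ 2 * ρ y) t := by
  intro t
  set F : ℝ×ℝ×ℝ → ℝ := fun p => f p.1 p.2.1 p.2.2 with hFdef
  have hFs : ContDiff ℝ (⊤ : ℕ∞) F := hf
  have hFd : Differentiable ℝ F := hFs.differentiable (by simp)
  have hD2d : Differentiable ℝ (D F e2) := (contDiff_fderiv_apply hFs e2).differentiable (by simp)
  have hD3d : Differentiable ℝ (D F e3) := (contDiff_fderiv_apply hFs e3).differentiable (by simp)
  -- periodicity of F
  have hpx : ∀ q : ℝ×ℝ×ℝ, F (q + (0, 2*π, 0)) = F q := by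
    rintro ⟨a, b, c⟩
    show f (a + 0) (b + 2*π) (c + 0) = f a b c
    rw [add_zero, add_zero, hfx]
  have hpy : ∀ q : ℝ×ℝ×ℝ, F (q + (0, 0, 2*π)) = F q := by
    rintro ⟨a, b, c⟩
    show f (a + 0) (b + 0) (c + 2*π) = f a b c
    rw [add_zero, add_zero, hfy]
  -- properties of v and ρ
  have hV1 : ContDiff ℝ 1 (deriv V) := by
    have h : ContDiff ℝ (1+1) V := by norm_num; exact hV
    exact (contDiff_succ_iff_deriv.mp h).2.2
  have hvC : ContDiff ℝ 1 v := by
    have : v = fun y => -deriv V y := funext hv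
    rw [this]
    exact hV1.neg
  have hvper : ∀ z, v (z + 2*π) = v z := by
    intro z
    rw [hv, hv]
    congr 1
    conv_lhs => rw [← deriv_comp_add_const]
    congr 1
    exact funext hVper
  have hρc : Continuous ρ := by
    have : ρ = fun y => Real.exp (-V y) / Z := funext hρ
    rw [this]
    exact (Real.continuous_exp.comp hV.continuous.neg).div_const Z
  have hρper : ∀ z, ρ (z + 2*π) = ρ z := by
    intro z
    rw [hρ, hρ, hVper z]
  have hρd : ∀ z, HasDerivAt ρ (v z * ρ z) z := by
    intro z
    have hVd : HasDerivAt V (deriv V z) z := (hV.differentiable (by norm_num) z).hasDerivAt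
    have h : HasDerivAt (fun y => Real.exp (-V y) / Z)
        (Real.exp (-V z) * -deriv V z / Z) z := (hVd.neg.exp).div_const Z
    have hval : v z * ρ z = Real.exp (-V z) * -deriv V z / Z := by
      rw [hv, hρ]; ring
    rw [hval]
    exact h.congr_of_eventuallyEq (Filter.Eventually.of_forall hρ)
  -- PDE in fderiv form
  have hPDE' : ∀ p : ℝ×ℝ×ℝ,
      D F e1 p = ν * (D (D F e3) e3 p - v p.2.2 * D F e3 p) - u p.2.2 * D F e2 p := by
    rintro ⟨a, b, c⟩
    have h := hPDE a b c
    have e1h : deriv (fun s => f s b c) a = D F e1 (a,b,c) := (slice1 hFd a b c).deriv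
    have e2h : deriv (fun x' => f a x' c) b = D F e2 (a,b,c) := (slice2 hFd a b c).deriv
    have e3h : deriv (fun y' => f a b y') c = D F e3 (a,b,c) := (slice3 hFd a b c).deriv
    have e33h : deriv (deriv (fun y' => f a b y')) c = D (D F e3) e3 (a,b,c) := by
      have hd : deriv (fun y' => f a b y') = fun y' => D F e3 (a,b,y') :=
        funext fun y' => (slice3 hFd a b y').deriv
      rw [hd]
      exact (slice3 hD3d a b c).deriv
    rw [e1h, e2h, e3h, e33h] at h
    linarith
  have KEY := main ν u v ρ hu huper hvC hvper hρc hρper hρd F hFs hpx hpy hPDE' t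
  -- convert the function
  have hfun : (fun s => ∫ x in (0:ℝ)..(2 * π), ∫ y in (0:ℝ)..(2 * π),
        (deriv u y * deriv (fun x' => f s x' y) x)
          * deriv (fun y' => f s x y') y * ρ y)
      = (fun s => ∫ x in (0:ℝ)..(2*π), ∫ y in (0:ℝ)..(2*π),
        (deriv u y * D F e2 (s,x,y)) * D F e3 (s,x,y) * ρ y) := by
    funext s
    refine dcongr fun x y => ?_
    rw [show deriv (fun x' => f s x' y) x = D F e2 (s,x,y) from (slice2 hFd s x y).deriv,
      show deriv (fun y' => f s x y') y = D F e3 (s,x,y) from (slice3 hFd s x y).deriv]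
  -- convert the four integrals in the value
  have hd2 : ∀ x y : ℝ, deriv (fun x' => f t x' y) x = D F e2 (t,x,y) :=
    fun x y => (slice2 hFd t x y).deriv
  have hd3 : ∀ x y : ℝ, deriv (fun y' => f t x y') y = D F e3 (t,x,y) :=
    fun x y => (slice3 hFd t x y).deriv
  have hd33 : ∀ x y : ℝ, deriv (deriv (fun y' => f t x y')) y = D (D F e3) e3 (t,x,y) := by
    intro x y
    have hd : deriv (fun y' => f t x y') = fun y' => D F e3 (t,x,y') :=
      funext fun y' => (slice3 hFd t x y').deriv
    rw [hd]
    exact (slice3 hD3d t x y).deriv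
  have hm : ∀ x y : ℝ, deriv (fun y' => deriv (fun x' => f t x' y') x) y
      = D (D F e2) e3 (t,x,y) := by
    intro x y
    have hd : (fun y' => deriv (fun x' => f t x' y') x) = fun y' => D F e2 (t,x,y') :=
      funext fun y' => (slice2 hFd t x y').deriv
    rw [hd]
    exact (slice3 hD2d t x y).deriv
  have ht1 : (∫ x in (0:ℝ)..(2 * π), ∫ y in (0:ℝ)..(2 * π),
        (deriv u y * deriv (fun y' => deriv (fun x' => f t x' y') x) y)
          * (deriv (deriv (fun y' => f t x y')) y
              - v y * deriv (fun y' => f t x y') y) * ρ y)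
      = ∫ x in (0:ℝ)..(2*π), ∫ y in (0:ℝ)..(2*π),
        (deriv u y * D (D F e2) e3 (t,x,y))
          * (D (D F e3) e3 (t,x,y) - v y * D F e3 (t,x,y)) * ρ y :=
    dcongr fun x y => by rw [hm x y, hd33 x y, hd3 x y]
  have ht2 : (∫ x in (0:ℝ)..(2 * π), ∫ y in (0:ℝ)..(2 * π),
        (deriv (deriv u) y * deriv (fun x' => f t x' y) x)
          * (deriv (deriv (fun y' => f t x y')) y
              - v y * deriv (fun y' => f t x y') y) * ρ y)
      = ∫ x in (0:ℝ)..(2*π), ∫ y in (0:ℝ)..(2*π),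
        (deriv (deriv u) y * D F e2 (t,x,y))
          * (D (D F e3) e3 (t,x,y) - v y * D F e3 (t,x,y)) * ρ y :=
    dcongr fun x y => by rw [hd2 x y, hd33 x y, hd3 x y]
  have ht3 : (∫ x in (0:ℝ)..(2 * π), ∫ y in (0:ℝ)..(2 * π),
        (v y * deriv u y * deriv (fun x' => f t x' y) x)
          * (deriv (deriv (fun y' => f t x y')) y
              - v y * deriv (fun y' => f t x y') y) * ρ y)
      = ∫ x in (0:ℝ)..(2*π), ∫ y in (0:ℝ)..(2*π),
        (v y * deriv u y * D F e2 (t,x,y))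
          * (D (D F e3) e3 (t,x,y) - v y * D F e3 (t,x,y)) * ρ y :=
    dcongr fun x y => by rw [hd2 x y, hd33 x y, hd3 x y]
  have ht4 : (∫ x in (0:ℝ)..(2 * π), ∫ y in (0:ℝ)..(2 * π),
        (deriv u y * deriv (fun x' => f t x' y) x) ^ 2 * ρ y)
      = ∫ x in (0:ℝ)..(2*π), ∫ y in (0:ℝ)..(2*π),
        (deriv u y * D F e2 (t,x,y)) ^ 2 * ρ y :=
    dcongr fun x y => by rw [hd2 x y]
  rw [hfun, ht1, ht2, ht3, ht4]
  exact KEY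
end
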